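/- Let C ⊆ Cend_N = M_N(k[D,v]) be a conformal subalgebra (a k[D]-submodule closed under all n-products a∘_n b = A(v)·∂_v^n(B(v))) such that its operator algebra S(C) equals M_N(k[q + h(p)]) for some polynomial h ∈ k[p]. Then h is a constant polynomial. -/

import Mathlib

/-!
If `h` were non-constant, `q + h(p)` would raise the degree of every nonzero polynomial by
exactly `deg h`, so `B ↦ B(q + h(p)) 1` would be injective. Write `1 = a(n)` with `a ∈ C`.
For `m` beyond the `D`-degree of `a`, `a(m) 1 = A_m = 0`, while `a(m) = B(q + h(p))` for some
`B`; hence `B = 0` and `a(m) = 0`. But `A_n = 1` makes the constant term of `a(m) X^(m-n)`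
equal to `C(m,n) (m-n)! ≠ 0`.
-/

open Polynomial

set_option synthInstance.maxHeartbeats 1000000
set_option maxHeartbeats 1000000

noncomputable section

variable (k : Type*) [Field k] [CharZero k]

/-- The operator `p`: multiplication by `X` on `k[X]`. -/
def pOp : Module.End k (Polynomial k) := LinearMap.mulLeft k (X : Polynomial k)

/-- The operator `q = d/dX` on `k[X]`. -/
def qOp : Module.End k (Polynomial k) := derivative

/-- The (first) Weyl algebra, realized concretely as the subalgebra of
`End_k(k[X])` generated by multiplication by `X` and `d/dX`.  (In characteristic
zero this is a faithful model of `k⟨p,q | qp - pq = 1⟩`.) -/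
def WeylA : Subalgebra k (Module.End k (Polynomial k)) :=
  Algebra.adjoin k {pOp k, qOp k}

/-- The element `p` of the Weyl algebra. -/
def pW : WeylA k := ⟨pOp k, Algebra.subset_adjoin (Set.mem_insert _ _)⟩

/-- The element `q` of the Weyl algebra. -/
def qW : WeylA k := ⟨qOp k, Algebra.subset_adjoin (Set.mem_insert_of_mem _ rfl)⟩

variable (N : ℕ)

/-- `M_N(W)`, the `N×N` matrices over the Weyl algebra. -/
abbrev MW := Matrix (Fin N) (Fin N) (WeylA k)

/-- The scalar matrix `p·Id_N`. -/
def pM : MW k N := Matrix.diagonal fun _ => pW k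

/-- The scalar matrix `q·Id_N`. -/
def qM : MW k N := Matrix.diagonal fun _ => qW k

/-- The derivation `∂_q(a) = [a,p]` on `M_N(W)`. -/
def dq (a : MW k N) : MW k N := a * pM k N - pM k N * a

/-- Evaluation of a polynomial at `p`, i.e. the embedding `k[p] → W`. -/
def polyP : Polynomial k →ₐ[k] WeylA k := Polynomial.aeval (pW k)

/-- Evaluation of a polynomial at `q`, i.e. the embedding `k[q] → W`. -/
def polyQ : Polynomial k →ₐ[k] WeylA k := Polynomial.aeval (qW k)

/-- Entries of `Cend_N = M_N(k[D,v])`: polynomials in `D` (outer variable)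
with coefficients in `k[v]` (inner variable). -/
abbrev EE (k : Type*) [Field k] := Polynomial (Polynomial k)

/-- `Cend_N` as `N×N` matrices over `k[D,v]`. -/
abbrev CM (k : Type*) [Field k] (N : ℕ) := Matrix (Fin N) (Fin N) (EE k)

/-- Polynomials in `λ` (outer) over `k[D,v]`, used to encode the
`λ`-product of `Cend_N`. -/
abbrev LL (k : Type*) [Field k] := Polynomial (EE k)

/-- Substitution `D ↦ -λ`, `v ↦ v` (applied to the left factor). -/
def phiA : EE k →+* LL k :=
  Polynomial.eval₂RingHom
    ((Polynomial.C : EE k →+* LL k).comp (Polynomial.C : Polynomial k →+* EE k))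
    (-(Polynomial.X : LL k))

/-- Substitution `v ↦ v + λ` on `k[v]`. -/
def gB : Polynomial k →+* LL k :=
  Polynomial.eval₂RingHom
    (((Polynomial.C : EE k →+* LL k).comp (Polynomial.C : Polynomial k →+* EE k)).comp
      (Polynomial.C : k →+* Polynomial k))
    (Polynomial.C (Polynomial.C (Polynomial.X : Polynomial k)) + (Polynomial.X : LL k))

/-- Substitution `D ↦ D + λ`, `v ↦ v + λ` (applied to the right factor). -/
def phiB : EE k →+* LL k :=
  Polynomial.eval₂RingHom (gB k) (Polynomial.C (Polynomial.X : EE k) + (Polynomial.X : LL k))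

/-- The `n`-th conformal product on `Cend_N = H ⊗ M_N(k[v])`, determined by
`A(v) ∘_n B(v) = A(v)·∂_v^n(B(v))` and the sesquilinearity axioms; it is
extracted as `n!` times the `λ^n`-coefficient of `a(-λ,v)·b(D+λ,v+λ)`. -/
def nmul (N : ℕ) (n : ℕ) (a b : CM k N) : CM k N :=
  ((a.map (phiA k)) * (b.map (phiB k))).map fun e => Nat.factorial n • e.coeff n

/-- The action of `D` on `Cend_N` (multiplication by `D`). -/
def Dmul (N : ℕ) (a : CM k N) : CM k N := a.map fun e => (Polynomial.X : EE k) * e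

/-- `C ⊆ Cend_N` is a conformal subalgebra: a `k[D]`-submodule closed under
all the `n`-products. -/
def IsConfSubalgebra (N : ℕ) (C : Submodule k (CM k N)) : Prop :=
  (∀ a ∈ C, Dmul k N a ∈ C) ∧ ∀ a ∈ C, ∀ b ∈ C, ∀ n : ℕ, nmul k N n a b ∈ C

/-- The coefficient matrices `A_s(v)` of `a = Σ_s (-D)^{(s)} ⊗ A_s(v)`. -/
def Acoef (N : ℕ) (a : CM k N) (s : ℕ) : Matrix (Fin N) (Fin N) (Polynomial k) :=
  ((-1 : k) ^ s * (Nat.factorial s : k)) • a.map fun e => e.coeff s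

/-- The operator `a(n) = Σ_s C(n,s)·A_s(p)·q^{n-s} ∈ M_N(W)` attached to
`a ∈ Cend_N`. -/
def opOf (N : ℕ) (a : CM k N) (n : ℕ) : MW k N :=
  ∑ s ∈ Finset.range (n + 1),
    (n.choose s) • ((Acoef k N a s).map (polyP k) * qM k N ^ (n - s))

section DegreeRaising

variable {R : Type*} [CommRing R] {T : Module.End R R[X]} {d : ℕ}

theorem pow_apply_one_ne_zero_and_natDegree
    (hT : ∀ u ≠ 0, T u ≠ 0 ∧ (T u).natDegree = u.natDegree + d) [Nontrivial R] (t : ℕ) :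
    (T ^ t) 1 ≠ 0 ∧ ((T ^ t) 1).natDegree = t * d := by
  induction t with
  | zero => simp
  | succ t ih =>
    obtain ⟨hne, hdeg⟩ := hT _ ih.1
    rw [pow_succ', Module.End.mul_apply]
    exact ⟨hne, by rw [hdeg, ih.2]; ring⟩

/-- The vectors `Tᵗ 1` have pairwise distinct degrees, so only the top term of
`P(T) 1 = ∑ₜ Pₜ • Tᵗ 1` reaches degree `deg P · d`. -/
theorem eq_zero_of_aeval_apply_one_eq_zero [NoZeroDivisors R] (hd : 0 < d)
    (hT : ∀ u ≠ 0, T u ≠ 0 ∧ (T u).natDegree = u.natDegree + d) {P : R[X]}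
    (hP : aeval T P 1 = 0) : P = 0 := by
  nontriviality R
  by_contra hP0
  have hsum : aeval T P 1 = ∑ t ∈ Finset.range (P.natDegree + 1), P.coeff t • (T ^ t) 1 := by
    rw [aeval_eq_sum_range, LinearMap.sum_apply]
    rfl
  have htop := congrArg (coeff · (P.natDegree * d)) (hsum.symm.trans hP)
  simp only [finsetSum_coeff, coeff_smul, coeff_zero] at htop
  rw [Finset.sum_eq_single_of_mem _ (Finset.self_mem_range_succ _)] at htop
  · obtain ⟨hne, hdeg⟩ := pow_apply_one_ne_zero_and_natDegree hT P.natDegree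
    rw [← hdeg, smul_eq_mul] at htop
    exact mul_ne_zero (leadingCoeff_ne_zero.mpr hP0) (leadingCoeff_ne_zero.mpr hne) htop
  · intro t ht hne
    have hlt : t * d < P.natDegree * d :=
      Nat.mul_lt_mul_of_pos_right (lt_of_le_of_ne (Finset.mem_range_succ_iff.mp ht) hne) hd
    rw [coeff_eq_zero_of_natDegree_lt (p := (T ^ t) 1)
      ((pow_apply_one_ne_zero_and_natDegree hT t).2 ▸ hlt), smul_zero]

end DegreeRaising

theorem degree_derivative_lt_degree_mul {R : Type*} [CommSemiring R] [NoZeroDivisors R]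
    {h u : R[X]} (hh : h ≠ 0) (hu : u ≠ 0) : (derivative u).degree < (h * u).degree :=
  (degree_derivative_lt hu).trans_le (mul_comm u h ▸ degree_le_mul_left u hh)

section WeylOperators

omit [CharZero k]

variable {k N}

theorem coe_polyP (g : k[X]) :
    ((polyP k g : WeylA k) : Module.End k k[X]) = LinearMap.mulLeft k g := by
  rw [polyP, aeval_subalgebra_coe,
    show ((pW k : WeylA k) : Module.End k k[X]) = Algebra.lmul k k[X] X from rfl,
    aeval_algHom_apply, aeval_X_left_apply]
  rfl

theorem coe_qW : ((qW k : WeylA k) : Module.End k k[X]) = derivative := rfl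

theorem coe_shift_apply (h u : k[X]) :
    ((qW k + polyP k h : WeylA k) : Module.End k k[X]) u = derivative u + h * u := by
  rw [Subalgebra.coe_add, coe_qW, coe_polyP]
  rfl

theorem shift_apply_ne_zero_and_natDegree {h : k[X]} (hh : h ≠ 0) (u : k[X]) (hu : u ≠ 0) :
    ((qW k + polyP k h : WeylA k) : Module.End k k[X]) u ≠ 0 ∧
      (((qW k + polyP k h : WeylA k) : Module.End k k[X]) u).natDegree =
        u.natDegree + h.natDegree := by
  have hlt := degree_derivative_lt_degree_mul hh hu
  rw [coe_shift_apply]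
  refine ⟨fun h0 => mul_ne_zero hh hu (degree_eq_bot.mp ?_), ?_⟩
  · rw [← degree_add_eq_right_of_degree_lt hlt, h0, degree_zero]
  · rw [natDegree_add_eq_right_of_degree_lt hlt, natDegree_mul hh hu, add_comm]

theorem qM_pow (e : ℕ) : qM k N ^ e = Matrix.diagonal fun _ => qW k ^ e := by
  rw [qM, Matrix.diagonal_pow]
  rfl

theorem coe_opOf_apply (a : CM k N) (m : ℕ) (i j : Fin N) (f : k[X]) :
    ((opOf k N a m i j : WeylA k) : Module.End k k[X]) f =
      ∑ s ∈ Finset.range (m + 1), m.choose s • (Acoef k N a s i j * derivative^[m - s] f) := by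
  simp only [opOf, qM_pow, Matrix.sum_apply, Matrix.smul_apply, Matrix.mul_diagonal,
    Matrix.map_apply]
  push_cast
  simp only [Finset.sum_apply, LinearMap.smul_apply, Module.End.mul_apply, coe_qW, coe_polyP,
    Module.End.pow_apply, LinearMap.mulLeft_apply]

theorem coe_opOf_apply_one (a : CM k N) (m : ℕ) (i j : Fin N) :
    ((opOf k N a m i j : WeylA k) : Module.End k k[X]) 1 = Acoef k N a m i j := by
  rw [coe_opOf_apply, Finset.sum_eq_single_of_mem m (Finset.self_mem_range_succ m)]
  · simp
  · intro s hs _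
    rw [iterate_derivative_one (by have := Finset.mem_range_succ_iff.mp hs; omega), mul_zero,
      smul_zero]

theorem coeff_zero_coe_opOf_apply_X_pow (a : CM k N) {n m : ℕ} (hnm : n ≤ m) (i j : Fin N) :
    (((opOf k N a m i j : WeylA k) : Module.End k k[X]) (X ^ (m - n))).coeff 0 =
      m.choose n * (m - n).factorial * (Acoef k N a n i j).coeff 0 := by
  rw [coe_opOf_apply, finsetSum_coeff,
    Finset.sum_eq_single_of_mem n (Finset.mem_range.mpr (by omega))]
  · simp only [iterate_derivative_X_pow_eq_smul, Nat.descFactorial_self, tsub_self, pow_zero,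
      Algebra.mul_smul_comm, mul_one, nsmul_eq_mul, coeff_smul, mul_coeff_zero,
      coeff_natCast_ite, ↓reduceIte, smul_eq_mul]
    ring
  · intro s hs hsn
    have hsm : s ≤ m := Finset.mem_range_succ_iff.mp hs
    rw [iterate_derivative_X_pow_eq_smul]
    rcases lt_or_gt_of_ne hsn with hlt | hgt
    · simp [Nat.descFactorial_eq_zero_iff_lt.mpr (by omega : m - n < m - s)]
    · rw [show m - n - (m - s) = s - n by omega]
      simp only [coeff_smul, mul_smul_comm, coeff_mul_X_pow', if_neg (show ¬ s - n ≤ 0 by omega),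
        smul_zero]

theorem eventually_Acoef_eq_zero (a : CM k N) : ∀ᶠ s in Filter.atTop, Acoef k N a s = 0 := by
  have hentry : ∀ i j, ∀ᶠ s in Filter.atTop, Acoef k N a s i j = 0 := fun i j =>
    Filter.eventually_atTop.2 ⟨(a i j).natDegree + 1, fun s hs => by
      simp [Acoef, coeff_eq_zero_of_natDegree_lt (by omega : (a i j).natDegree < s)]⟩
  filter_upwards [Filter.eventually_all.2 fun i => Filter.eventually_all.2 (hentry i)] with s hs
  exact Matrix.ext hs

theorem opOf_ne_zero_of_Acoef_eq_one [CharZero k] {a : CM k N} {n m : ℕ} {i : Fin N}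
    (hA : Acoef k N a n i i = 1) (hnm : n ≤ m) : opOf k N a m ≠ 0 := by
  intro h0
  have hcoeff := coeff_zero_coe_opOf_apply_X_pow a hnm i i
  rw [h0, hA] at hcoeff
  simp only [Matrix.zero_apply, ZeroMemClass.coe_zero, LinearMap.zero_apply, coeff_zero,
    coeff_one_zero, mul_one, zero_eq_mul, Nat.cast_eq_zero] at hcoeff
  exact hcoeff.elim (Nat.choose_pos hnm).ne' (Nat.factorial_ne_zero _)

end WeylOperators

theorem operator_algebra_shifted_current (N : ℕ) (hN : 0 < N)
    (C : Submodule k (CM k N))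
    (h : Polynomial k)
    (hS : {x : MW k N | ∃ a ∈ C, ∃ n : ℕ, x = opOf k N a n} =
      {x : MW k N | ∃ B : Matrix (Fin N) (Fin N) (Polynomial k),
        x = B.map (Polynomial.aeval (qW k + polyP k h))}) :
    ∃ c : k, h = Polynomial.C c := by
  by_contra hconst
  have hdeg : 0 < h.natDegree := Nat.pos_of_ne_zero fun h0 =>
    hconst ((natDegree_eq_zero.mp h0).imp fun _ hc => hc.symm)
  have hS' := Set.ext_iff.mp hS
  obtain ⟨a, haC, n, hn⟩ := (hS' 1).mpr ⟨1, (Matrix.map_one _ (map_zero _) (map_one _)).symm⟩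
  let i : Fin N := ⟨0, hN⟩
  have hAn : Acoef k N a n i i = 1 := by
    rw [← coe_opOf_apply_one, ← hn, Matrix.one_apply_eq]
    rfl
  obtain ⟨m, hAm, hnm⟩ := ((eventually_Acoef_eq_zero a).and (Filter.eventually_ge_atTop n)).exists
  obtain ⟨B, hB⟩ := (hS' (opOf k N a m)).mp ⟨a, haC, m, rfl⟩
  refine opOf_ne_zero_of_Acoef_eq_one hAn hnm (Matrix.ext fun i' j' => ?_)
  -- `a(m)` kills `1` because `A_m = 0`, and `q + h(p)` raises degrees by `deg h > 0`
  have hkill := coe_opOf_apply_one a m i' j'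
  rw [hAm, hB, Matrix.map_apply, aeval_subalgebra_coe] at hkill
  rw [hB, Matrix.map_apply, eq_zero_of_aeval_apply_one_eq_zero hdeg
    (shift_apply_ne_zero_and_natDegree (ne_zero_of_natDegree_gt hdeg)) hkill, map_zero]
  rfl

end
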